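/- For every n ≥ 1 and every b < 2^n, T^[n](b + 2^n) = T^[n](b) + 3^(m(b,n)), where m(b,n) counts the odd terms among b, T(b), ..., T^[n-1](b). -/

import Mathlib

def T (N : ℕ) : ℕ := if N % 2 = 0 then N / 2 else (3 * N + 1) / 2

def m (b n : ℕ) : ℕ := ((Finset.range n).filter (fun k => Odd (T^[k] b))).card

/-! Adding `2 * c` to the argument of `T` keeps its parity branch and adds `c` or `3 * c` to the
value. So a perturbation `c * 2 ^ n` survives `n` steps of `T`: it is halved at every step and
tripled at every odd one. -/

lemma T_add_two_mul (b c : ℕ) : T (b + 2 * c) = T b + 3 ^ (if Odd b then 1 else 0) * c := by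
  rcases Nat.even_or_odd' b with ⟨k, rfl | rfl⟩
  · have hk : ¬Odd (2 * k) := by simp
    simp only [T, hk, if_false]
    split_ifs <;> omega
  · have hk : Odd (2 * k + 1) := odd_two_mul_add_one k
    simp only [T, hk, if_true]
    split_ifs <;> omega

lemma m_zero (b : ℕ) : m b 0 = 0 := rfl

lemma m_succ (b n : ℕ) : m b (n + 1) = m (T b) n + (if Odd b then 1 else 0) := by
  simp only [m, Finset.card_filter, Finset.sum_range_succ', Function.iterate_succ_apply,
    Function.iterate_zero_apply]
  rfl

lemma T_iterate_add_mul_two_pow (n b c : ℕ) :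
    T^[n] (b + c * 2 ^ n) = T^[n] b + c * 3 ^ m b n := by
  induction n generalizing b c with
  | zero => simp [m_zero]
  | succ n ih =>
    have hstep : T (b + c * 2 ^ (n + 1)) = T b + (3 ^ (if Odd b then 1 else 0) * c) * 2 ^ n := by
      rw [mul_assoc, ← T_add_two_mul]; ring_nf
    rw [Function.iterate_succ_apply, Function.iterate_succ_apply, hstep, ih, m_succ, pow_add]
    ring

theorem stmt2 : ∀ n ≥ 1, ∀ b < 2 ^ n,
    T^[n] (b + 2 ^ n) = T^[n] b + 3 ^ m b n := by
  intro n _ b _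
  simpa using T_iterate_add_mul_two_pow n b 1
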